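/- arXiv:2408.07801 — 8 statements merged into one kernel-verified Lean document; each statement's English description precedes it below -/
import Mathlib

section
/- With the setup of a locally finite hyperplane arrangement 𝔥 in a real affine space and the separating-hyperplane counting function d, for points x, y, z in the complement of the hyperplanes the following are equivalent: (a) d(x,y) + d(y,z) = d(x,z); (b) 𝔥_{x,y} ⊆ 𝔥_{x,z} and 𝔥_{y,z} ⊆ 𝔥_{x,z}; (c) 𝔥_{x,y} ∩ 𝔥_{y,z} = ∅. -/
private lemma sign_xor (a b c : ℝ) (ha : a ≠ 0) (hb : b ≠ 0) (hc : c ≠ 0) :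
    a * c < 0 ↔ Xor' (a * b < 0) (b * c < 0) := by
  rcases ha.lt_or_gt with h1|h1 <;> rcases hb.lt_or_gt with h2|h2 <;>
    rcases hc.lt_or_gt with h3|h3 <;>
  simp [Xor', mul_neg_iff, h1, h2, h3, h1.asymm, h2.asymm, h3.asymm]

private lemma sep_finite {n : ℕ} (𝔥 : Set (EuclideanSpace ℝ (Fin n) →ᵃ[ℝ] ℝ))
    (hlf : ∀ a : EuclideanSpace ℝ (Fin n), ∃ U ∈ nhds a,
      {f ∈ 𝔥 | ∃ y ∈ U, f y = 0}.Finite)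
    (x y : EuclideanSpace ℝ (Fin n)) :
    {f ∈ 𝔥 | f x * f y < 0}.Finite := by
  choose U hU hfin using hlf
  have hseg : IsCompact (segment ℝ x y) := by
    rw [segment_eq_image_lineMap]
    exact isCompact_Icc.image AffineMap.lineMap_continuous
  obtain ⟨t, _, hcov⟩ := hseg.elim_nhds_subcover U (fun a _ => hU a)
  refine Set.Finite.subset (Set.Finite.biUnion t.finite_toSet (fun a _ => hfin a)) ?_
  rintro f ⟨hf𝔥, hfxy⟩
  -- find a zero of f on the segment
  have hcont : Continuous f := f.continuous_of_finiteDimensional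
  have hg : Continuous fun s : ℝ => f (AffineMap.lineMap x y s) :=
    hcont.comp AffineMap.lineMap_continuous
  have h0 : f (AffineMap.lineMap x y (0:ℝ)) = f x := by simp
  have h1 : f (AffineMap.lineMap x y (1:ℝ)) = f y := by simp
  have : ∃ s ∈ Set.Icc (0:ℝ) 1, f (AffineMap.lineMap x y s) = 0 := by
    rcases mul_neg_iff.mp hfxy with ⟨hpx, hny⟩ | ⟨hnx, hpy⟩
    · have h00 : (0:ℝ) ∈ Set.Icc (f (AffineMap.lineMap x y (1:ℝ)))
          (f (AffineMap.lineMap x y (0:ℝ))) := by rw [h0, h1]; exact ⟨hny.le, hpx.le⟩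
      obtain ⟨s, hs, hs0⟩ := intermediate_value_Icc' zero_le_one hg.continuousOn h00
      exact ⟨s, hs, hs0⟩
    · have h00 : (0:ℝ) ∈ Set.Icc (f (AffineMap.lineMap x y (0:ℝ)))
          (f (AffineMap.lineMap x y (1:ℝ))) := by rw [h0, h1]; exact ⟨hnx.le, hpy.le⟩
      obtain ⟨s, hs, hs0⟩ := intermediate_value_Icc zero_le_one hg.continuousOn h00
      exact ⟨s, hs, hs0⟩
  obtain ⟨s, hs, hs0⟩ := this
  have hpseg : AffineMap.lineMap x y s ∈ segment ℝ x y := by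
    rw [segment_eq_image_lineMap]; exact ⟨s, hs, rfl⟩
  obtain ⟨a, hat, hpa⟩ := Set.mem_iUnion₂.mp (hcov hpseg)
  exact Set.mem_biUnion hat ⟨hf𝔥, _, hpa, hs0⟩
/-- For a locally finite hyperplane arrangement `𝔥` and points `x, y, z` off the
hyperplanes, the following are equivalent:
(a) `d(x,y) + d(y,z) = d(x,z)`;
(b) `𝔥_{x,y} ⊆ 𝔥_{x,z}` and `𝔥_{y,z} ⊆ 𝔥_{x,z}`;
(c) `𝔥_{x,y} ∩ 𝔥_{y,z} = ∅`. -/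
theorem stmt_1 (n : ℕ)
    (𝔥 : Set (EuclideanSpace ℝ (Fin n) →ᵃ[ℝ] ℝ))
    (hlf : ∀ a : EuclideanSpace ℝ (Fin n), ∃ U ∈ nhds a,
      {f ∈ 𝔥 | ∃ y ∈ U, f y = 0}.Finite)
    (x y z : EuclideanSpace ℝ (Fin n))
    (hx : ∀ f ∈ 𝔥, f x ≠ 0) (hy : ∀ f ∈ 𝔥, f y ≠ 0) (hz : ∀ f ∈ 𝔥, f z ≠ 0) :
    (({f ∈ 𝔥 | f x * f y < 0}.ncard + {f ∈ 𝔥 | f y * f z < 0}.ncard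
        = {f ∈ 𝔥 | f x * f z < 0}.ncard) ↔
      ({f ∈ 𝔥 | f x * f y < 0} ⊆ {f ∈ 𝔥 | f x * f z < 0} ∧
        {f ∈ 𝔥 | f y * f z < 0} ⊆ {f ∈ 𝔥 | f x * f z < 0})) ∧
    (({f ∈ 𝔥 | f x * f y < 0} ⊆ {f ∈ 𝔥 | f x * f z < 0} ∧
        {f ∈ 𝔥 | f y * f z < 0} ⊆ {f ∈ 𝔥 | f x * f z < 0}) ↔
      {f ∈ 𝔥 | f x * f y < 0} ∩ {f ∈ 𝔥 | f y * f z < 0} = ∅) := by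
  set A := {f ∈ 𝔥 | f x * f y < 0} with hAdef
  set B := {f ∈ 𝔥 | f y * f z < 0} with hBdef
  set C := {f ∈ 𝔥 | f x * f z < 0} with hCdef
  have hA : A.Finite := sep_finite 𝔥 hlf x y
  have hB : B.Finite := sep_finite 𝔥 hlf y z
  have hkey : ∀ f ∈ 𝔥, (f x * f z < 0 ↔ Xor' (f x * f y < 0) (f y * f z < 0)) :=
    fun f hf => sign_xor _ _ _ (hx f hf) (hy f hf) (hz f hf)
  -- (b) ↔ (c)
  have hbc : (A ⊆ C ∧ B ⊆ C) ↔ A ∩ B = ∅ := by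
    constructor
    · rintro ⟨hAC, hBC⟩
      ext f
      simp only [Set.mem_inter_iff, Set.mem_empty_iff_false, iff_false]
      rintro ⟨hfA, hfB⟩
      have hfC := hAC hfA
      have := (hkey f hfC.1).mp hfC.2
      rcases this with ⟨_, h2⟩ | ⟨_, h2⟩
      · exact h2 hfB.2
      · exact h2 hfA.2
    · intro hdisj
      constructor
      · rintro f ⟨hf, hxy⟩
        have hnB : ¬ (f y * f z < 0) := fun h => by
          have : f ∈ A ∩ B := ⟨⟨hf, hxy⟩, ⟨hf, h⟩⟩
          simp [hdisj] at this
        exact ⟨hf, (hkey f hf).mpr (Or.inl ⟨hxy, hnB⟩)⟩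
      · rintro f ⟨hf, hyz⟩
        have hnA : ¬ (f x * f y < 0) := fun h => by
          have : f ∈ A ∩ B := ⟨⟨hf, h⟩, ⟨hf, hyz⟩⟩
          simp [hdisj] at this
        exact ⟨hf, (hkey f hf).mpr (Or.inr ⟨hyz, hnA⟩)⟩
  have hCsub : C ⊆ A ∪ B := by
    rintro f ⟨hf, hxz⟩
    rcases (hkey f hf).mp hxz with ⟨h1, _⟩ | ⟨h1, _⟩
    · exact Or.inl ⟨hf, h1⟩
    · exact Or.inr ⟨hf, h1⟩
  refine ⟨?_, hbc⟩
  constructor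
  · intro hcard
    refine hbc.mpr ?_
    have hle : C.ncard ≤ (A ∪ B).ncard := Set.ncard_le_ncard hCsub (hA.union hB)
    have hun : (A ∪ B).ncard + (A ∩ B).ncard = A.ncard + B.ncard :=
      Set.ncard_union_add_ncard_inter A B hA hB
    have : (A ∩ B).ncard = 0 := by omega
    have hfin : (A ∩ B).Finite := hA.inter_of_left B
    exact (Set.ncard_eq_zero hfin).mp this
  · intro hb
    have hdisj : A ∩ B = ∅ := hbc.mp hb
    have hCeq : C = A ∪ B := by
      apply Set.Subset.antisymm hCsub
      rintro f (hfA | hfB)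
      · exact hb.1 hfA
      · exact hb.2 hfB
    rw [hCeq, Set.ncard_union_eq (Set.disjoint_iff_inter_eq_empty.mpr hdisj) hA hB]
end

section
/- Let 𝔥' ⊆ 𝔥 be a subset of a locally finite hyperplane arrangement, and let d'(x,y) count hyperplanes in 𝔥' separating x and y while d(x,y) counts hyperplanes in 𝔥 separating x and y. If x, y, z lie in the complement of ⋃𝔥 and d(x,y) + d(y,z) = d(x,z), then d'(x,y) + d'(y,z) = d'(x,z). -/
/-!
Write `A`, `B`, `C` for the hyperplanes of `𝔥` separating `x, y`, resp. `y, z`, resp. `x, z`.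
Since `y` lies on no hyperplane, a hyperplane separates `x` and `z` only if it separates exactly
one of the pairs `x, y` and `y, z`, so `C ⊆ A ∆ B` and `|C| ≤ |A| + |B| - 2 |A ∩ B|`. Additivity
therefore forces `A ∩ B = ∅` and `C = A ∪ B`, and both identities survive intersecting with `𝔥'`.
The sets involved are finite because the segment `[x, y]` is compact and so meets only finitely
many hyperplanes of a locally finite arrangement.
-/

open Set AffineMap Topology
open scoped symmDiff

namespace Set

variable {α : Type*} {A B C : Set α}

theorem disjoint_and_eq_union_of_subset_symmDiff (hA : A.Finite) (hB : B.Finite)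
    (hC : C ⊆ A ∆ B) (h : A.ncard + B.ncard = C.ncard) : Disjoint A B ∧ C = A ∪ B := by
  have hAB : A ∩ B ⊆ A ∪ B := inter_subset_left.trans subset_union_left
  have hunion := ncard_union_add_ncard_inter A B hA hB
  have hsdiff := ncard_sdiff_add_ncard_of_subset hAB (hA.union hB)
  have hCle : C.ncard ≤ ((A ∪ B) \ (A ∩ B)).ncard :=
    ncard_le_ncard (hC.trans (symmDiff_eq_sup_sdiff_inf A B).le) (hA.union hB).sdiff
  have hinter : (A ∩ B).ncard = 0 := by omega
  refine ⟨disjoint_iff_inter_eq_empty.2 ((ncard_eq_zero (hA.inter_of_left B)).1 hinter),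
    eq_of_subset_of_ncard_le (hC.trans symmDiff_subset_union) (by omega) (hA.union hB)⟩

end Set

theorem xor_mul_neg_of_mul_neg {K : Type*} [CommRing K] [LinearOrder K] [IsStrictOrderedRing K]
    {a b c : K} (hb : b ≠ 0) (hac : a * c < 0) : Xor (a * b < 0) (b * c < 0) := by
  have hprod : a * b * (b * c) < 0 := by
    have : a * b * (b * c) = a * c * (b * b) := by ring
    exact this ▸ mul_neg_of_neg_of_pos hac (mul_self_pos.2 hb)
  rcases mul_neg_iff.1 hprod with ⟨hab, hbc⟩ | ⟨hab, hbc⟩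
  · exact Or.inr ⟨hbc, hab.not_gt⟩
  · exact Or.inl ⟨hab, hbc.not_gt⟩

theorem finite_setOf_exists_eq_zero_of_isCompact {X F R : Type*} [TopologicalSpace X] [Zero R]
    [FunLike F X R] {𝔥 : Set F} (hlf : ∀ a : X, ∃ U ∈ 𝓝 a, {f ∈ 𝔥 | ∃ y ∈ U, f y = 0}.Finite)
    {K : Set X} (hK : IsCompact K) : {f ∈ 𝔥 | ∃ y ∈ K, f y = 0}.Finite := by
  choose U hU hUfin using hlf
  obtain ⟨t, -, hcov⟩ := hK.elim_nhds_subcover U fun a _ => hU a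
  refine (t.finite_toSet.biUnion fun a _ => hUfin a).subset ?_
  rintro f ⟨hf, y, hyK, hy0⟩
  obtain ⟨a, hat, hya⟩ := mem_iUnion₂.1 (hcov hyK)
  exact mem_biUnion hat ⟨hf, y, hya, hy0⟩

section Arrangement

variable {V P : Type*} [AddCommGroup V] [Module ℝ V] [AddTorsor V P]

/-- A hyperplane is given by an affine functional `f` vanishing on it. -/
def separating (𝔥 : Set (P →ᵃ[ℝ] ℝ)) (x y : P) : Set (P →ᵃ[ℝ] ℝ) :=
  {f ∈ 𝔥 | f x * f y < 0}

theorem separating_subset_symmDiff {𝔥 : Set (P →ᵃ[ℝ] ℝ)} {x y z : P}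
    (hy : ∀ f ∈ 𝔥, f y ≠ 0) :
    separating 𝔥 x z ⊆ separating 𝔥 x y ∆ separating 𝔥 y z := by
  rintro f ⟨hf, hxz⟩
  rcases xor_mul_neg_of_mul_neg (hy f hf) hxz with ⟨hxy, hyz⟩ | ⟨hyz, hxy⟩
  · exact Or.inl ⟨⟨hf, hxy⟩, fun h => hyz h.2⟩
  · exact Or.inr ⟨⟨hf, hyz⟩, fun h => hxy h.2⟩

theorem separating_eq_inter_of_subset {𝔥 𝔥' : Set (P →ᵃ[ℝ] ℝ)} (hsub : 𝔥' ⊆ 𝔥) (x y : P) :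
    separating 𝔥' x y = 𝔥' ∩ separating 𝔥 x y := by
  ext f
  exact ⟨fun ⟨hf, h⟩ => ⟨hf, hsub hf, h⟩, fun ⟨hf, _, h⟩ => ⟨hf, h⟩⟩

theorem exists_lineMap_eq_zero_of_mul_neg (f : P →ᵃ[ℝ] ℝ) {x y : P} (h : f x * f y < 0) :
    ∃ t ∈ Icc (0 : ℝ) 1, f (lineMap x y t) = 0 := by
  -- `t = f x / (f x - f y)`, with numerator and denominator multiplied by `f x`
  have hden : 0 < f x * f x - f x * f y := by nlinarith [mul_self_nonneg (f x)]
  refine ⟨f x * f x / (f x * f x - f x * f y),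
    ⟨div_nonneg (mul_self_nonneg _) hden.le, (div_le_one hden).2 (by linarith)⟩, ?_⟩
  rw [apply_lineMap, lineMap_apply_ring', div_mul_eq_mul_div, div_add' _ _ _ hden.ne',
    div_eq_zero_iff]
  exact Or.inl (by ring)

variable [TopologicalSpace V] [ContinuousSMul ℝ V] [TopologicalSpace P] [IsTopologicalAddTorsor P]

theorem separating_finite {𝔥 : Set (P →ᵃ[ℝ] ℝ)}
    (hlf : ∀ a : P, ∃ U ∈ 𝓝 a, {f ∈ 𝔥 | ∃ y ∈ U, f y = 0}.Finite) (x y : P) :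
    (separating 𝔥 x y).Finite := by
  have hseg : IsCompact (lineMap x y '' Icc (0 : ℝ) 1) :=
    isCompact_Icc.image lineMap_continuous
  refine (finite_setOf_exists_eq_zero_of_isCompact hlf hseg).subset ?_
  rintro f ⟨hf, hxy⟩
  obtain ⟨t, ht, hft⟩ := exists_lineMap_eq_zero_of_mul_neg f hxy
  exact ⟨hf, lineMap x y t, mem_image_of_mem _ ht, hft⟩

end Arrangement

theorem stmt_2_general (n : ℕ)
    (𝔥 𝔥' : Set (EuclideanSpace ℝ (Fin n) →ᵃ[ℝ] ℝ)) (hsub : 𝔥' ⊆ 𝔥)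
    (hlf : ∀ a : EuclideanSpace ℝ (Fin n), ∃ U ∈ nhds a,
      {f ∈ 𝔥 | ∃ y ∈ U, f y = 0}.Finite)
    (x y z : EuclideanSpace ℝ (Fin n))
    (hy : ∀ f ∈ 𝔥, f y ≠ 0)
    (hadd : {f ∈ 𝔥 | f x * f y < 0}.ncard + {f ∈ 𝔥 | f y * f z < 0}.ncard
      = {f ∈ 𝔥 | f x * f z < 0}.ncard) :
    {f ∈ 𝔥' | f x * f y < 0}.ncard + {f ∈ 𝔥' | f y * f z < 0}.ncard
      = {f ∈ 𝔥' | f x * f z < 0}.ncard := by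
  have hxy := separating_finite hlf x y
  have hyz := separating_finite hlf y z
  obtain ⟨hdisj, hxz⟩ := disjoint_and_eq_union_of_subset_symmDiff hxy hyz
    (separating_subset_symmDiff hy) hadd
  change (separating 𝔥' x y).ncard + (separating 𝔥' y z).ncard = (separating 𝔥' x z).ncard
  simp only [separating_eq_inter_of_subset hsub, hxz, inter_union_distrib_left]
  exact (ncard_union_eq (hdisj.mono inter_subset_right inter_subset_right)
    (hxy.inter_of_right _) (hyz.inter_of_right _)).symm

/-- If `𝔥' ⊆ 𝔥` is a subset of a locally finite hyperplane arrangement and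
`d` (resp. `d'`) counts the hyperplanes of `𝔥` (resp. `𝔥'`) separating two points,
then additivity `d(x,y) + d(y,z) = d(x,z)` implies `d'(x,y) + d'(y,z) = d'(x,z)`. -/
theorem stmt_2 (n : ℕ)
    (𝔥 𝔥' : Set (EuclideanSpace ℝ (Fin n) →ᵃ[ℝ] ℝ)) (hsub : 𝔥' ⊆ 𝔥)
    (hlf : ∀ a : EuclideanSpace ℝ (Fin n), ∃ U ∈ nhds a,
      {f ∈ 𝔥 | ∃ y ∈ U, f y = 0}.Finite)
    (x y z : EuclideanSpace ℝ (Fin n))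
    (hx : ∀ f ∈ 𝔥, f x ≠ 0) (hy : ∀ f ∈ 𝔥, f y ≠ 0) (hz : ∀ f ∈ 𝔥, f z ≠ 0)
    (hadd : {f ∈ 𝔥 | f x * f y < 0}.ncard + {f ∈ 𝔥 | f y * f z < 0}.ncard
      = {f ∈ 𝔥 | f x * f z < 0}.ncard) :
    {f ∈ 𝔥' | f x * f y < 0}.ncard + {f ∈ 𝔥' | f y * f z < 0}.ncard
      = {f ∈ 𝔥' | f x * f z < 0}.ncard :=
  stmt_2_general n 𝔥 𝔥' hsub hlf x y z hy hadd
end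

section
/- Let G be a group, M, U, Ū subgroups of G such that the multiplication map M × Ū × U → G is injective, M ∩ (Ū·U) = {1}, and for every m ∈ M, mUm⁻¹ = U and mŪm⁻¹ = Ū. Assume moreover that any element of G commuting with all of M lies in M. If n ∈ G normalizes M (nMn⁻¹ = M) and n = ū·u with ū ∈ Ū, u ∈ U, then n = 1. -/
/-- Abstract form of the lemma `N_G(M)(F) ∩ Ū(F)·U(F) = {1}`: if the product map
`M × Ū × U → G` is injective, `M` normalizes `U` and `Ū`, every element of `G`
commuting with all of `M` lies in `M`, and `M ∩ (Ū·U) = {1}`, then an element `n`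
normalizing `M` which can be written `n = ū·u` with `ū ∈ Ū`, `u ∈ U` is trivial. -/
theorem stmt_3 {G : Type*} [Group G] (M U Ubar : Subgroup G)
    (hinj : Function.Injective (fun p : M × Ubar × U => (p.1 : G) * p.2.1 * p.2.2))
    (hU : ∀ m ∈ M, ∀ u : G, u ∈ U ↔ m * u * m⁻¹ ∈ U)
    (hUbar : ∀ m ∈ M, ∀ u : G, u ∈ Ubar ↔ m * u * m⁻¹ ∈ Ubar)
    (hcent : ∀ g : G, (∀ m ∈ M, g * m = m * g) → g ∈ M)
    (htriv : ∀ m ∈ M, ∀ ub ∈ Ubar, ∀ u ∈ U, m = ub * u → m = 1)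
    (n : G) (hnorm : ∀ m : G, m ∈ M ↔ n * m * n⁻¹ ∈ M)
    (ub : G) (hub : ub ∈ Ubar) (u : G) (hu : u ∈ U) (hn : n = ub * u) :
    n = 1 := by
  have hcomm : ∀ m ∈ M, n * m = m * n := by
    intro m hm
    have hm' : n * m * n⁻¹ ∈ M := (hnorm m).mp hm
    have hminv : m⁻¹ ∈ M := M.inv_mem hm
    have hub' : m⁻¹ * ub * m ∈ Ubar := by
      have := (hUbar m⁻¹ hminv ub).mp hub
      simpa using this
    have hu' : m⁻¹ * u * m ∈ U := by
      have := (hU m⁻¹ hminv u).mp hu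
      simpa using this
    have key : ((⟨m, hm⟩, ⟨m⁻¹ * ub * m, hub'⟩, ⟨m⁻¹ * u * m, hu'⟩) :
        M × Ubar × U) = (⟨n * m * n⁻¹, hm'⟩, ⟨ub, hub⟩, ⟨u, hu⟩) := by
      apply hinj
      simp only [hn]
      group
    have : m = n * m * n⁻¹ := congrArg (fun p : M × Ubar × U => (p.1 : G)) key
    conv_rhs => rw [this]
    group
  have hnM : n ∈ M := hcent n hcomm
  exact htriv n hnM ub hub u hu hn
end

section
/- Let K₁, K₂ be compact open subgroups of a topological group G, with M a subgroup, and suppose each pair (Kᵢ, ρᵢ) (i=1,2) is 'decomposed' with respect to subgroups U, M, Ū in the sense that Kᵢ = (Kᵢ ∩ U)·(Kᵢ ∩ M)·(Kᵢ ∩ Ū), ρᵢ restricted to Kᵢ ∩ U and Kᵢ ∩ Ū is trivial, and ρᵢ restricted to K_{M,i} := Kᵢ ∩ M is an irreducible representation ρ_{M,i}. Then Hom_{K₁ ∩ K₂}(ρ₁, ρ₂) = Hom_{K_{M,1} ∩ K_{M,2}}(ρ_{M,1}, ρ_{M,2}) as subspaces of linear maps between the representation spaces. -/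
/-!
An element `h ∈ K₁ ∩ K₂` factors as `u m ū` inside `K₁` and inside `K₂`; by uniqueness of the
factorization in `U × M × Ū` the two middle factors agree, so `m ∈ K_{M,1} ∩ K_{M,2}`. Since
each `ρᵢ` is trivial on the outer factors, `ρᵢ h = ρᵢ m`, and intertwining by `h` reduces to
intertwining by `m`.
-/

section

variable {G : Type*} [Group G]

theorem Subgroup.middle_eq_of_mul_mul_eq {U M Ubar : Subgroup G}
    (hinj : Function.Injective (fun p : U × M × Ubar => (p.1 : G) * p.2.1 * p.2.2))
    {u u' m m' ub ub' : G} (hu : u ∈ U) (hu' : u' ∈ U) (hm : m ∈ M) (hm' : m' ∈ M)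
    (hub : ub ∈ Ubar) (hub' : ub' ∈ Ubar) (h : u * m * ub = u' * m' * ub') : m = m' :=
  congrArg (fun p : U × M × Ubar => (p.2.1 : G))
    (hinj (a₁ := (⟨u, hu⟩, ⟨m, hm⟩, ⟨ub, hub⟩)) (a₂ := (⟨u', hu'⟩, ⟨m', hm'⟩, ⟨ub', hub'⟩)) h)

theorem apply_mul_mul_eq_of_trivial {C V : Type*} [Semiring C] [AddCommMonoid V] [Module C V]
    {K U Ubar : Subgroup G} (ρ : G → Module.End C V)
    (hmul : ∀ g ∈ K, ∀ g' ∈ K, ρ (g * g') = ρ g ∘ₗ ρ g')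
    (htrivU : ∀ u ∈ K ⊓ U, ρ u = LinearMap.id) (htrivUbar : ∀ u ∈ K ⊓ Ubar, ρ u = LinearMap.id)
    {u m ub : G} (hu : u ∈ K ⊓ U) (hm : m ∈ K) (hub : ub ∈ K ⊓ Ubar) :
    ρ (u * m * ub) = ρ m := by
  rw [hmul _ (K.mul_mem hu.1 hm) _ hub.1, hmul _ hu.1 _ hm, htrivU _ hu, htrivUbar _ hub]
  rfl

end

theorem stmt_4_general {G : Type*} [Group G] {C : Type*} [Field C]
    {V₁ V₂ : Type*} [AddCommGroup V₁] [Module C V₁] [AddCommGroup V₂] [Module C V₂]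
    (U M Ubar : Subgroup G)
    (hinj : Function.Injective (fun p : U × M × Ubar => (p.1 : G) * p.2.1 * p.2.2))
    (K₁ K₂ : Subgroup G)
    (ρ₁ : G → Module.End C V₁) (ρ₂ : G → Module.End C V₂)
    (hmul₁ : ∀ g ∈ K₁, ∀ g' ∈ K₁, ρ₁ (g * g') = ρ₁ g ∘ₗ ρ₁ g')
    (hmul₂ : ∀ g ∈ K₂, ∀ g' ∈ K₂, ρ₂ (g * g') = ρ₂ g ∘ₗ ρ₂ g')
    (hdec₁ : ∀ k ∈ K₁, ∃ u ∈ K₁ ⊓ U, ∃ m ∈ K₁ ⊓ M, ∃ ub ∈ K₁ ⊓ Ubar, k = u * m * ub)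
    (hdec₂ : ∀ k ∈ K₂, ∃ u ∈ K₂ ⊓ U, ∃ m ∈ K₂ ⊓ M, ∃ ub ∈ K₂ ⊓ Ubar, k = u * m * ub)
    (htriv₁U : ∀ u ∈ K₁ ⊓ U, ρ₁ u = LinearMap.id)
    (htriv₁Ubar : ∀ u ∈ K₁ ⊓ Ubar, ρ₁ u = LinearMap.id)
    (htriv₂U : ∀ u ∈ K₂ ⊓ U, ρ₂ u = LinearMap.id)
    (htriv₂Ubar : ∀ u ∈ K₂ ⊓ Ubar, ρ₂ u = LinearMap.id)
    (T : V₁ →ₗ[C] V₂) :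
    (∀ h ∈ K₁ ⊓ K₂, T ∘ₗ ρ₁ h = ρ₂ h ∘ₗ T) ↔
      (∀ h ∈ (K₁ ⊓ M) ⊓ (K₂ ⊓ M), T ∘ₗ ρ₁ h = ρ₂ h ∘ₗ T) := by
  refine ⟨fun H h hh => H h ⟨hh.1.1, hh.2.1⟩, fun H h hh => ?_⟩
  obtain ⟨u₁, hu₁, m₁, hm₁, ub₁, hub₁, rfl⟩ := hdec₁ h hh.1
  obtain ⟨u₂, hu₂, m₂, hm₂, ub₂, hub₂, hdec⟩ := hdec₂ _ hh.2
  have hm : m₁ = m₂ :=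
    Subgroup.middle_eq_of_mul_mul_eq hinj hu₁.2 hu₂.2 hm₁.2 hm₂.2 hub₁.2 hub₂.2 hdec
  subst hm
  rw [apply_mul_mul_eq_of_trivial ρ₁ hmul₁ htriv₁U htriv₁Ubar hu₁ hm₁.1 hub₁, hdec,
    apply_mul_mul_eq_of_trivial ρ₂ hmul₂ htriv₂U htriv₂Ubar hu₂ hm₂.1 hub₂]
  exact H m₁ ⟨hm₁, hm₂⟩

/-- If `(K₁, ρ₁)` and `(K₂, ρ₂)` are pairs decomposed with respect to `(U, M, Ū)`
(Iwahori factorization `Kᵢ = (Kᵢ∩U)(Kᵢ∩M)(Kᵢ∩Ū)`, `ρᵢ` trivial on `Kᵢ∩U` and `Kᵢ∩Ū`,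
and `ρᵢ|_{Kᵢ∩M} = ρ_{M,i}` irreducible), then
`Hom_{K₁∩K₂}(ρ₁, ρ₂) = Hom_{K_{M,1}∩K_{M,2}}(ρ_{M,1}, ρ_{M,2})`
as subspaces of linear maps. -/
theorem stmt_4 {G : Type*} [Group G] {C : Type*} [Field C]
    {V₁ V₂ : Type*} [AddCommGroup V₁] [Module C V₁] [AddCommGroup V₂] [Module C V₂]
    (U M Ubar : Subgroup G)
    (hinj : Function.Injective (fun p : U × M × Ubar => (p.1 : G) * p.2.1 * p.2.2))
    (K₁ K₂ : Subgroup G)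
    (ρ₁ : G → Module.End C V₁) (ρ₂ : G → Module.End C V₂)
    (hmul₁ : ∀ g ∈ K₁, ∀ g' ∈ K₁, ρ₁ (g * g') = ρ₁ g ∘ₗ ρ₁ g')
    (hmul₂ : ∀ g ∈ K₂, ∀ g' ∈ K₂, ρ₂ (g * g') = ρ₂ g ∘ₗ ρ₂ g')
    (hdec₁ : ∀ k ∈ K₁, ∃ u ∈ K₁ ⊓ U, ∃ m ∈ K₁ ⊓ M, ∃ ub ∈ K₁ ⊓ Ubar, k = u * m * ub)
    (hdec₂ : ∀ k ∈ K₂, ∃ u ∈ K₂ ⊓ U, ∃ m ∈ K₂ ⊓ M, ∃ ub ∈ K₂ ⊓ Ubar, k = u * m * ub)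
    (htriv₁U : ∀ u ∈ K₁ ⊓ U, ρ₁ u = LinearMap.id)
    (htriv₁Ubar : ∀ u ∈ K₁ ⊓ Ubar, ρ₁ u = LinearMap.id)
    (htriv₂U : ∀ u ∈ K₂ ⊓ U, ρ₂ u = LinearMap.id)
    (htriv₂Ubar : ∀ u ∈ K₂ ⊓ Ubar, ρ₂ u = LinearMap.id)
    (hirr₁ : ∀ W : Submodule C V₁, (∀ m ∈ K₁ ⊓ M, ∀ v ∈ W, ρ₁ m v ∈ W) → W = ⊥ ∨ W = ⊤)
    (hirr₂ : ∀ W : Submodule C V₂, (∀ m ∈ K₂ ⊓ M, ∀ v ∈ W, ρ₂ m v ∈ W) → W = ⊥ ∨ W = ⊤)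
    (T : V₁ →ₗ[C] V₂) :
    (∀ h ∈ K₁ ⊓ K₂, T ∘ₗ ρ₁ h = ρ₂ h ∘ₗ T) ↔
      (∀ h ∈ (K₁ ⊓ M) ⊓ (K₂ ⊓ M), T ∘ₗ ρ₁ h = ρ₂ h ∘ₗ T) :=
  stmt_4_general U M Ubar hinj K₁ K₂ ρ₁ ρ₂ hmul₁ hmul₂ hdec₁ hdec₂ htriv₁U htriv₁Ubar htriv₂U
    htriv₂Ubar T
end

section
/- Let C be an algebraically closed field, C⁺ ⊆ C× \ {1} a subset such that for every q ∈ C× \ {1} exactly one of q, q⁻¹ lies in C⁺. Let p, q ∈ C× be nonzero. Then there exists a unique scalar d ∈ C× such that d is a root of q·X² − p·X − 1 = 0 and q·d² ∈ C⁺. -/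
/-- Let `C` be an algebraically closed field and `C⁺ ⊆ C× \ {1}` a subset such that
for every `q ∈ C× \ {1}` exactly one of `q, q⁻¹` lies in `C⁺`. For nonzero `p, q ∈ C`
there is a unique nonzero `d ∈ C` which is a root of `q·X² − p·X − 1 = 0` and
satisfies `q·d² ∈ C⁺`. -/
theorem stmt_7 {C : Type*} [Field C] [IsAlgClosed C]
    (Cplus : Set C) (hsub : ∀ r ∈ Cplus, r ≠ 0 ∧ r ≠ 1)
    (hCplus : ∀ r : C, r ≠ 0 → r ≠ 1 → (({r, r⁻¹} : Set C) ∩ Cplus).ncard = 1)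
    (p q : C) (hp : p ≠ 0) (hq : q ≠ 0) :
    ∃! d : C, d ≠ 0 ∧ q * d ^ 2 - p * d - 1 = 0 ∧ q * d ^ 2 ∈ Cplus := by
  -- obtain a root d₁ of the quadratic
  obtain ⟨d₁, hd₁⟩ : ∃ d : C, q * d ^ 2 - p * d - 1 = 0 := by
    obtain ⟨x, hx⟩ := IsAlgClosed.exists_root
      (Polynomial.C q * Polynomial.X ^ 2 - Polynomial.C p * Polynomial.X - 1) (by
        have h2 : (Polynomial.C q * Polynomial.X ^ 2 - Polynomial.C p * Polynomial.X
            - 1 : Polynomial C).degree = 2 := by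
          compute_degree!
        rw [h2]; decide)
    refine ⟨x, ?_⟩
    simpa [Polynomial.IsRoot] using hx
  have hd₁0 : d₁ ≠ 0 := by
    rintro rfl; simp at hd₁
  set d₂ : C := -(q * d₁)⁻¹ with hd₂def
  have hd₂0 : d₂ ≠ 0 := by
    simp [hd₂def, hq, hd₁0]
  have hprod : q * d₁ * d₂ = -1 := by
    rw [hd₂def]; field_simp
  have hfac : ∀ d : C, q * d ^ 2 - p * d - 1 = q * (d - d₁) * (d - d₂) := by
    intro d
    have hI : q * d₁ * (q * d₁)⁻¹ = 1 := mul_inv_cancel₀ (mul_ne_zero hq hd₁0)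
    rw [hd₂def]
    linear_combination (d * q * (q * d₁)⁻¹) * hd₁ + (1 - d * q * d₁ + p * d) * hI
  have hroot : ∀ d : C, q * d ^ 2 - p * d - 1 = 0 ↔ d = d₁ ∨ d = d₂ := by
    intro d
    rw [hfac d]
    constructor
    · intro h
      rcases mul_eq_zero.mp h with h | h
      · rcases mul_eq_zero.mp h with h | h
        · exact absurd h hq
        · exact Or.inl (sub_eq_zero.mp h)
      · exact Or.inr (sub_eq_zero.mp h)
    · rintro (rfl | rfl) <;> ring
  have hd₂ : q * d₂ ^ 2 - p * d₂ - 1 = 0 := (hroot d₂).mpr (Or.inr rfl)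
  -- the two values q d² are mutually inverse
  have hinv : q * d₂ ^ 2 = (q * d₁ ^ 2)⁻¹ := by
    have : (q * d₁ ^ 2) * (q * d₂ ^ 2) = 1 := by
      have := hprod
      linear_combination (q * d₁ * d₂ - 1) * this
    field_simp [hd₁0, hq] at this ⊢
    linear_combination this
  have hr0 : q * d₁ ^ 2 ≠ 0 := by
    simp [hq, hd₁0]
  have hr1 : q * d₁ ^ 2 ≠ 1 := by
    intro h
    have : p * d₁ = 0 := by linear_combination -hd₁ + h
    rcases mul_eq_zero.mp this with h | h
    · exact hp h
    · exact hd₁0 h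
  have hr1' : q * d₂ ^ 2 ≠ 1 := by
    intro h
    have : p * d₂ = 0 := by linear_combination -hd₂ + h
    rcases mul_eq_zero.mp this with h | h
    · exact hp h
    · exact hd₂0 h
  -- key: if q d₁² = q d₂² then d₁ = d₂
  have hsame : q * d₁ ^ 2 = q * d₂ ^ 2 → d₁ = d₂ := by
    intro h
    have hsq : d₁ ^ 2 = d₂ ^ 2 := mul_left_cancel₀ hq h
    have : (d₂ - d₁) * (d₂ + d₁) = 0 := by linear_combination -hsq
    rcases mul_eq_zero.mp this with h' | h'
    · exact (sub_eq_zero.mp h').symm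
    · -- d₂ = -d₁ : then 2 p d₁ = 0, so char 2, so -d₁ = d₁
      have hne : d₂ = -d₁ := by linear_combination h'
      have h2 : (2 : C) * (p * d₁) = 0 := by
        have := hd₂
        rw [hne] at this
        linear_combination this - hd₁
      have h2' : (2 : C) = 0 := by
        rcases mul_eq_zero.mp h2 with h | h
        · exact h
        · rcases mul_eq_zero.mp h with h | h
          · exact absurd h hp
          · exact absurd h hd₁0
      rw [hne]
      linear_combination d₁ * h2'
  obtain ⟨a, ha⟩ := Set.ncard_eq_one.mp
    (hCplus (q * d₁ ^ 2) hr0 hr1)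
  have haCplus : a ∈ Cplus := by
    have : a ∈ ({q * d₁ ^ 2, (q * d₁ ^ 2)⁻¹} : Set C) ∩ Cplus := ha ▸ rfl
    exact this.2
  have hamem : a = q * d₁ ^ 2 ∨ a = q * d₂ ^ 2 := by
    have : a ∈ ({q * d₁ ^ 2, (q * d₁ ^ 2)⁻¹} : Set C) ∩ Cplus := ha ▸ rfl
    rcases this.1 with h | h
    · exact Or.inl h
    · exact Or.inr (by rw [hinv]; exact h)
  -- uniqueness helper: both values cannot be in Cplus unless d₁ = d₂
  have hboth : q * d₁ ^ 2 ∈ Cplus → q * d₂ ^ 2 ∈ Cplus → d₁ = d₂ := by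
    intro h1 h2
    have m1 : q * d₁ ^ 2 ∈ ({q * d₁ ^ 2, (q * d₁ ^ 2)⁻¹} : Set C) ∩ Cplus :=
      ⟨Or.inl rfl, h1⟩
    have m2 : q * d₂ ^ 2 ∈ ({q * d₁ ^ 2, (q * d₁ ^ 2)⁻¹} : Set C) ∩ Cplus :=
      ⟨Or.inr hinv, h2⟩
    rw [ha] at m1 m2
    exact hsame (m1.trans m2.symm)
  rcases hamem with h | h
  · refine ⟨d₁, ⟨hd₁0, hd₁, h ▸ haCplus⟩, ?_⟩
    rintro y ⟨hy0, hyroot, hyC⟩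
    rcases (hroot y).mp hyroot with rfl | rfl
    · rfl
    · exact (hboth (h ▸ haCplus) hyC).symm
  · refine ⟨d₂, ⟨hd₂0, hd₂, h ▸ haCplus⟩, ?_⟩
    rintro y ⟨hy0, hyroot, hyC⟩
    rcases (hroot y).mp hyroot with rfl | rfl
    · exact hboth hyC (h ▸ haCplus)
    · rfl
end

section
/- In the abstract semi-direct product algebra C[Ω, μ] ⋉ H(W_aff, q), where H(W_aff, q) is the affine Hecke algebra with basis {T_w : w ∈ W_aff}, parameters q_s ∈ C× \ {1}, and C[Ω, μ] is a twisted group algebra with basis {E_t : t ∈ Ω}, every support-preserving C-algebra automorphism Ψ (i.e., Ψ(E_t·T_w) = c_{t,w}·E_t·T_w for scalars c_{t,w} ∈ C×) is of the form Ψ(E_t·T_w) = χ(t)·E_t·T_w for a unique group homomorphism χ: Ω → C×; in particular Ψ acts as the identity on H(W_aff, q). -/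
/-!
An automorphism that rescales every `T_s` must fix it: comparing the images of the two sides of the
quadratic relation `T_s² = (q_s - 1) T_s + q_s` in the basis `{T_s, 1}` forces the scalar `d`
to satisfy `(q_s - 1) d (d - 1) = 0`. Since every `T_w` is a product of `T_s` along a reduced
word, the Hecke algebra is fixed pointwise. On the twisted group algebra the scalars `c_t` with
`Ψ(E_t) = c_t E_t` then satisfy `c_{t₁} c_{t₂} μ(t₁, t₂) = μ(t₁, t₂) c_{t₁ t₂}`, so `t ↦ c_t` is
a character because the cocycle takes unit values.
-/

@[elab_as_elim]
theorem induction_on_length {W : Type*} [Monoid W] (S : Set W) (ℓ : W → ℕ)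
    (hdesc : ∀ w : W, w ≠ 1 → ∃ w' : W, ∃ s ∈ S, w = w' * s ∧ ℓ w = ℓ w' + 1)
    {P : W → Prop} (one : P 1)
    (mul : ∀ w : W, ∀ s ∈ S, ℓ (w * s) = ℓ w + 1 → P w → P (w * s)) (w : W) :
    P w := by
  induction hn : ℓ w using Nat.strong_induction_on generalizing w with
  | _ n ih =>
    by_cases hw : w = 1
    · exact hw ▸ one
    obtain ⟨w', s, hs, rfl, hlen⟩ := hdesc w hw
    exact mul w' s hs hlen (ih (ℓ w') (by omega) w' rfl)

section

variable {C A F : Type*} [Field C] [Ring A] [Algebra C A] [FunLike F A A] [AlgHomClass F C A A]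

theorem eq_one_of_map_eq_smul_of_mul_self_eq (φ : F) {x : A} {a b d : C}
    (hx : LinearIndependent C ![x, 1]) (ha : a ≠ 0) (hd : d ≠ 0)
    (hxx : x * x = a • x + b • (1 : A)) (hφx : φ x = d • x) : d = 1 := by
  have hsplit : (d * d * a - a * d) • x + (d * d * b - b) • (1 : A) = 0 := by
    have h : (d * d) • (x * x) = a • d • x + b • (1 : A) := by
      rw [← smul_mul_smul_comm, ← hφx, ← map_mul, hxx, map_add, map_smul, map_smul, map_one,
        hφx]
    rw [hxx, smul_add, smul_smul, smul_smul, smul_smul] at h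
    rw [sub_smul, sub_smul, sub_add_sub_comm, h, sub_self]
  have hcoeff : a * d * (d - 1) = 0 := by
    linear_combination ((LinearIndependent.pair_iff.mp hx) _ _ hsplit).1
  simpa [ha, hd, sub_eq_zero] using hcoeff

theorem map_eq_self_of_hecke_relations {W : Type*} [Monoid W] (S : Set W) (ℓ : W → ℕ)
    (hdesc : ∀ w : W, w ≠ 1 → ∃ w' : W, ∃ s ∈ S, w = w' * s ∧ ℓ w = ℓ w' + 1)
    (q : W → C) (hq1 : ∀ s ∈ S, q s ≠ 1) (T : W → A) (hT : LinearIndependent C T)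
    (hT1 : T 1 = 1) (hTs : ∀ s ∈ S, T s * T s = (q s - 1) • T s + q s • (1 : A))
    (hTmul : ∀ (w : W), ∀ s ∈ S, ℓ (w * s) = ℓ w + 1 → T (w * s) = T w * T s)
    (φ : F) (hφ : ∀ s ∈ S, ∃ c : C, c ≠ 0 ∧ φ (T s) = c • T s) (w : W) :
    φ (T w) = T w := by
  have hgen : ∀ s ∈ S, φ (T s) = T s := by
    intro s hs
    by_cases hs1 : s = 1
    · rw [hs1, hT1, map_one]
    obtain ⟨d, hd, hφs⟩ := hφ s hs
    have hpair : LinearIndependent C ![T s, 1] := by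
      have hinj : Function.Injective ![s, 1] := by
        intro i j; fin_cases i <;> fin_cases j <;> simp [hs1, Ne.symm hs1]
      convert hT.comp ![s, 1] hinj using 1
      ext i; fin_cases i <;> simp [hT1]
    have hd1 := eq_one_of_map_eq_smul_of_mul_self_eq φ hpair (sub_ne_zero.mpr (hq1 s hs)) hd
      (hTs s hs) hφs
    rw [hφs, hd1, one_smul]
  refine induction_on_length S ℓ hdesc (by rw [hT1, map_one]) (fun w s hs hlen hw => ?_) w
  rw [hTmul w s hs hlen, map_mul, hw, hgen s hs]

theorem exists_monoidHom_map_eq_smul {G : Type*} [Group G] (φ : F) (e : G → A)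
    (μ : G → G → C) (he : ∀ g, e g ≠ 0) (he1 : e 1 = 1) (hμ : ∀ g h, μ g h ≠ 0)
    (hmul : ∀ g h, e g * e h = μ g h • e (g * h))
    (hφ : ∀ g, ∃ c : C, φ (e g) = c • e g) :
    ∃ χ : G →* Cˣ, ∀ g, φ (e g) = (χ g : C) • e g := by
  choose c hc using hφ
  have hc1 : c 1 = 1 :=
    smul_left_injective C (he 1) (by simp only; rw [← hc, he1, map_one, one_smul])
  have hcmul : ∀ g h, c (g * h) = c g * c h := by
    intro g h
    have key : (μ g h * c (g * h)) • e (g * h) = (μ g h * (c g * c h)) • e (g * h) := by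
      rw [← smul_smul, ← hc, ← map_smul, ← hmul, map_mul, hc, hc, smul_mul_smul_comm, hmul,
        smul_smul, mul_comm]
    exact mul_left_cancel₀ (hμ g h) (smul_left_injective C (he _) key)
  exact ⟨MonoidHom.toHomUnits ⟨⟨c, hc1⟩, hcmul⟩, fun g => by simpa using hc g⟩

end

theorem stmt_11_general {C A : Type*} [Field C] [Ring A] [Algebra C A]
    {Ω W : Type*} [Group Ω] [Group W]
    (S : Set W)
    (ℓ : W → ℕ)
    (hdesc : ∀ w : W, w ≠ 1 → ∃ w' : W, ∃ s ∈ S, w = w' * s ∧ ℓ w = ℓ w' + 1)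
    (q : W → C) (hq1 : ∀ s ∈ S, q s ≠ 1)
    (μ : Ω → Ω → C) (hμ0 : ∀ t₁ t₂, μ t₁ t₂ ≠ 0)
    (E : Ω → A) (T : W → A)
    (hE1 : E 1 = 1) (hT1 : T 1 = 1)
    (hTs : ∀ s ∈ S, T s * T s = (q s - 1) • T s + q s • (1 : A))
    (hTmul : ∀ (w : W), ∀ s ∈ S, ℓ (w * s) = ℓ w + 1 → T (w * s) = T w * T s)
    (hEmul : ∀ t₁ t₂ : Ω, E t₁ * E t₂ = μ t₁ t₂ • E (t₁ * t₂))
    (hli : LinearIndependent C (fun p : Ω × W => E p.1 * T p.2))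
    (Ψ : A ≃ₐ[C] A)
    (hΨ : ∀ (t : Ω) (w : W), ∃ c : C, c ≠ 0 ∧ Ψ (E t * T w) = c • (E t * T w)) :
    (∀ w : W, Ψ (T w) = T w) ∧
    ∃! χ : Ω →* Cˣ, ∀ (t : Ω) (w : W), Ψ (E t * T w) = (χ t : C) • (E t * T w) := by
  have hT : LinearIndependent C T := by
    simpa [Function.comp_def, hE1] using hli.comp _ (Prod.mk_right_injective (1 : Ω))
  have hE : ∀ t, E t ≠ 0 := fun t => by simpa [hT1] using hli.ne_zero (t, 1)
  have hΨT : ∀ w, Ψ (T w) = T w :=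
    map_eq_self_of_hecke_relations S ℓ hdesc q hq1 T hT hT1 hTs hTmul Ψ
      (fun s _ => by simpa [hE1] using hΨ 1 s)
  obtain ⟨χ, hχ⟩ := exists_monoidHom_map_eq_smul Ψ E μ hE hE1 hμ0 hEmul
    (fun t => (hΨ t 1).imp fun _ h => by simpa [hT1] using h.2)
  refine ⟨hΨT, χ, fun t w => by rw [map_mul, hχ, hΨT, smul_mul_assoc], fun χ' hχ' => ?_⟩
  ext t
  exact smul_left_injective C (hE t) (by simpa [hT1, hχ] using (hχ' t 1).symm)

/-- Classification of support-preserving automorphisms of the semi-direct product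
algebra `C[Ω, μ] ⋉ H(W_aff, q)`. The algebra `A` has a basis `{E_t · T_w}` where
`{T_w}` satisfies the affine Hecke algebra relations (quadratic relations with
parameters `q_s ∈ C× \ {1}` for generators `s ∈ S`, and the length-additive
multiplication rule), `{E_t}` spans a twisted group algebra with 2-cocycle values
`μ(t₁,t₂) ∈ C×`, and `E_t · T_w = T_{t·w} · E_t` for a permutation action of `Ω`
preserving `S`. Every support-preserving `C`-algebra automorphism `Ψ` of `A` acts
as the identity on the Hecke algebra part, and there is a unique group homomorphism
`χ : Ω → C×` with `Ψ(E_t · T_w) = χ(t) · E_t · T_w`. -/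
theorem stmt_11 {C A : Type*} [Field C] [Ring A] [Algebra C A]
    {Ω W : Type*} [Group Ω] [Group W]
    (S : Set W) (hS1 : (1 : W) ∉ S)
    (hSgen : Subgroup.closure S = ⊤)
    (ℓ : W → ℕ) (hℓ1 : ℓ 1 = 0)
    (hdesc : ∀ w : W, w ≠ 1 → ∃ w' : W, ∃ s ∈ S, w = w' * s ∧ ℓ w = ℓ w' + 1)
    (q : W → C) (hq0 : ∀ s ∈ S, q s ≠ 0) (hq1 : ∀ s ∈ S, q s ≠ 1)
    (act : Ω → W → W) (hactS : ∀ t : Ω, ∀ s ∈ S, act t s ∈ S)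
    (μ : Ω → Ω → C) (hμ0 : ∀ t₁ t₂, μ t₁ t₂ ≠ 0)
    (E : Ω → A) (T : W → A)
    (hE1 : E 1 = 1) (hT1 : T 1 = 1)
    (hTs : ∀ s ∈ S, T s * T s = (q s - 1) • T s + q s • (1 : A))
    (hTmul : ∀ (w : W), ∀ s ∈ S, ℓ (w * s) = ℓ w + 1 → T (w * s) = T w * T s)
    (hEmul : ∀ t₁ t₂ : Ω, E t₁ * E t₂ = μ t₁ t₂ • E (t₁ * t₂))
    (hET : ∀ (t : Ω) (w : W), E t * T w = T (act t w) * E t)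
    (hli : LinearIndependent C (fun p : Ω × W => E p.1 * T p.2))
    (hspan : Submodule.span C (Set.range (fun p : Ω × W => E p.1 * T p.2)) = ⊤)
    (Ψ : A ≃ₐ[C] A)
    (hΨ : ∀ (t : Ω) (w : W), ∃ c : C, c ≠ 0 ∧ Ψ (E t * T w) = c • (E t * T w)) :
    (∀ w : W, Ψ (T w) = T w) ∧
    ∃! χ : Ω →* Cˣ, ∀ (t : Ω) (w : W), Ψ (E t * T w) = (χ t : C) • (E t * T w) :=
  stmt_11_general S ℓ hdesc q hq1 μ hμ0 E T hE1 hT1 hTs hTmul hEmul hli Ψ hΨ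
end

section
/- Let C be a field with involution c ↦ c̄ (fixed field R), A a C-algebra with conjugate-linear anti-involution *, and {φ_s : s ∈ S} elements satisfying quadratic relations φ_s² = (q_s − 1)φ_s + q_s·1 with q_s ∈ C× \ {1}, where φ_s and 1 are linearly independent and φ_s* = c_s·φ_s for some c_s ∈ C×. Assume that the parameter normalization is unique in the sense that if (dφ_s)² = (q−1)(dφ_s) + q·1 with q in a distinguished set C⁺ then d = 1 (as in Proposition on unique scalars). Then c_s = 1, i.e., φ_s* = φ_s. -/
theorem quadratic_relation_map_of_antimul {C A F : Type*} [CommRing C] [Ring A] [Algebra C A]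
    [FunLike F C C] [RingHomClass F C C] (σ : F) (st : A → A)
    (hadd : ∀ a b : A, st (a + b) = st a + st b)
    (hsmul : ∀ (c : C) (a : A), st (c • a) = σ c • st a)
    (hmul : ∀ a b : A, st (a * b) = st b * st a)
    (hone : st (1 : A) = 1)
    {φ : A} {q : C} (hq : σ q = q) (hrel : φ * φ = (q - 1) • φ + q • (1 : A)) :
    st φ * st φ = (q - 1) • st φ + q • (1 : A) := by
  rw [← hmul, hrel, hadd, hsmul, hsmul, hone, map_sub, map_one, hq]

theorem stmt_14_general {C A : Type*} [Field C] [Ring A] [Algebra C A]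
    (σ : C ≃+* C)
    (Cplus : Set C)
    (st : A → A)
    (hadd : ∀ a b : A, st (a + b) = st a + st b)
    (hsmul : ∀ (c : C) (a : A), st (c • a) = σ c • st a)
    (hmul : ∀ a b : A, st (a * b) = st b * st a)
    (hone : st (1 : A) = 1)
    (φs : A) (qs : C) (hqs : qs ∈ Cplus) (hqsfix : σ qs = qs)
    (hrel : φs * φs = (qs - 1) • φs + qs • (1 : A))
    (cs : C) (hcs : cs ≠ 0) (hstφ : st φs = cs • φs)
    (huniq : ∀ d qq : C, d ≠ 0 →
      (d • φs) * (d • φs) = (qq - 1) • (d • φs) + qq • (1 : A) → qq ∈ Cplus → d = 1) :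
    cs = 1 := by
  have hstrel := quadratic_relation_map_of_antimul σ st hadd hsmul hmul hone hqsfix hrel
  rw [hstφ] at hstrel
  exact huniq cs qs hcs hstrel hqs

/-- With `st` a conjugate-linear anti-involution of a `C`-algebra `A`, suppose `φ_s`
satisfies the quadratic relation `φ_s² = (q_s − 1)φ_s + q_s·1` with `q_s ∈ C⁺`
(where `C⁺ ⊆ C× \ {1}` contains exactly one of each inverse pair and `q_s` is fixed
by the involution), `{φ_s, 1}` is linearly independent, and `st(φ_s) = c_s·φ_s`.
If the normalization is unique — `(d·φ_s)² = (q−1)(d·φ_s) + q·1` with `q ∈ C⁺`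
forces `d = 1` — then `c_s = 1`, i.e., `st(φ_s) = φ_s`. -/
theorem stmt_14 {C A : Type*} [Field C] [Ring A] [Algebra C A]
    (σ : C ≃+* C) (hσ : ∀ c : C, σ (σ c) = c)
    (Cplus : Set C) (hsub : ∀ r ∈ Cplus, r ≠ 0 ∧ r ≠ 1)
    (hCplus : ∀ r : C, r ≠ 0 → r ≠ 1 → (({r, r⁻¹} : Set C) ∩ Cplus).ncard = 1)
    (st : A → A)
    (hadd : ∀ a b : A, st (a + b) = st a + st b)
    (hsmul : ∀ (c : C) (a : A), st (c • a) = σ c • st a)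
    (hmul : ∀ a b : A, st (a * b) = st b * st a)
    (hinvol : ∀ a : A, st (st a) = a)
    (hone : st (1 : A) = 1)
    (φs : A) (qs : C) (hqs : qs ∈ Cplus) (hqsfix : σ qs = qs)
    (hrel : φs * φs = (qs - 1) • φs + qs • (1 : A))
    (hind : ∀ a b : C, a • φs + b • (1 : A) = 0 → a = 0 ∧ b = 0)
    (cs : C) (hcs : cs ≠ 0) (hstφ : st φs = cs • φs)
    (huniq : ∀ d qq : C, d ≠ 0 →
      (d • φs) * (d • φs) = (qq - 1) • (d • φs) + qq • (1 : A) → qq ∈ Cplus → d = 1) :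
    cs = 1 :=
  stmt_14_general σ Cplus st hadd hsmul hmul hone φs qs hqs hqsfix hrel cs hcs hstφ huniq
end

section
/- Let H be a locally profinite group, K₁, K₂, K' open subgroups with K₁, K₂ ⊆ K', and ρᵢ a smooth representation of Kᵢ (i = 1,2). Then the restriction map Φ ↦ Φ|_{ind_{K₁}^{K'}(V₁)} gives a linear isomorphism from the subspace of Hom_H(ind_{K₁}^H ρ₁, ind_{K₂}^H ρ₂) consisting of maps Φ with Φ(ind_{K₁}^{K'} V₁) ⊆ ind_{K₂}^{K'} V₂, onto Hom_{K'}(ind_{K₁}^{K'} ρ₁, ind_{K₂}^{K'} ρ₂). -/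
open scoped Classical

private theorem aux_mem_stmt18 {C H V₁ : Type*} [Field C] [Group H]
    [AddCommGroup V₁] [Module C V₁]
    (K₁ K' : Subgroup H) (hK₁ : K₁ ≤ K') (ρ₁ : Representation C K₁ V₁)
    (Ind₁ : Submodule C (H → V₁))
    (hInd₁ : ∀ f : H → V₁, f ∈ Ind₁ ↔
      ((∀ (k : K₁) (h : H), f (↑k * h) = ρ₁ k (f h)) ∧
        ∃ s : Finset H, ∀ x : H, f x ≠ 0 → ∃ h ∈ s, ∃ k : K₁, x = ↑k * h))
    (IndK'₁ : Submodule C (H → V₁))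
    (hIndK'₁ : ∀ f : H → V₁, f ∈ IndK'₁ ↔ (f ∈ Ind₁ ∧ ∀ x : H, x ∉ K' → f x = 0))
    (f : H → V₁) (hf : f ∈ Ind₁) (x : H) :
    (fun h => if h ∈ K' then f (h * x) else 0) ∈ IndK'₁ := by
  obtain ⟨h1, s, hs⟩ := (hInd₁ f).mp hf
  rw [hIndK'₁]
  refine ⟨(hInd₁ _).mpr ⟨?_, ?_⟩, ?_⟩
  · intro k h
    have hiff : ((↑k * h : H) ∈ K') ↔ (h ∈ K') := K'.mul_mem_cancel_left (hK₁ k.2)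
    show (if (↑k * h : H) ∈ K' then f (↑k * h * x) else 0)
      = ρ₁ k (if h ∈ K' then f (h * x) else 0)
    by_cases hh : h ∈ K'
    · rw [if_pos (hiff.mpr hh), if_pos hh, mul_assoc]
      exact h1 k (h * x)
    · rw [if_neg (fun hc => hh (hiff.mp hc)), if_neg hh, map_zero]
  · refine ⟨s.image (· * x⁻¹), fun y hy => ?_⟩
    have hy' : (if y ∈ K' then f (y * x) else 0) ≠ 0 := hy
    by_cases hyK : y ∈ K'
    · rw [if_pos hyK] at hy'
      obtain ⟨h₀, hh₀, k, hk⟩ := hs (y * x) hy'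
      exact ⟨h₀ * x⁻¹, Finset.mem_image.mpr ⟨h₀, hh₀, rfl⟩, k, by
        rw [← mul_assoc, ← hk, mul_inv_cancel_right]⟩
    · rw [if_neg hyK] at hy'; exact absurd rfl hy'
  · intro y hy
    show (if y ∈ K' then f (y * x) else 0) = 0
    rw [if_neg hy]


/-- Restriction isomorphism for compactly induced representations. Let `H` be a
locally profinite group, `K₁, K₂ ⊆ K'` open subgroups, `ρᵢ` smooth representations of
`Kᵢ`, and `Indᵢ` the compactly induced representation `ind_{Kᵢ}^H(ρᵢ)` realized as
functions `H → Vᵢ` supported on finitely many cosets with `f(kh) = ρᵢ(k)f(h)`, with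
`IndK'ᵢ` the subspace of functions supported in `K'`. Then the restriction map
`Φ ↦ Φ|` is a bijection from the space of `H`-equivariant (for the right regular
action) linear maps `Ind₁ → Ind₂` carrying `IndK'₁` into `IndK'₂`, onto the space of
`K'`-equivariant linear maps `IndK'₁ → IndK'₂`; this is expressed below as
injectivity and surjectivity of the restriction correspondence. -/
theorem stmt_18 {C : Type*} [Field C]
    {H : Type*} [Group H] [TopologicalSpace H] [IsTopologicalGroup H]
    [TotallyDisconnectedSpace H] [LocallyCompactSpace H]
    {V₁ V₂ : Type*} [AddCommGroup V₁] [Module C V₁] [AddCommGroup V₂] [Module C V₂]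
    (K₁ K₂ K' : Subgroup H)
    (hK₁open : IsOpen (K₁ : Set H)) (hK₂open : IsOpen (K₂ : Set H))
    (hK'open : IsOpen (K' : Set H))
    (hK₁ : K₁ ≤ K') (hK₂ : K₂ ≤ K')
    (ρ₁ : Representation C K₁ V₁) (ρ₂ : Representation C K₂ V₂)
    (hsm₁ : ∀ v : V₁, IsOpen {h : H | ∃ hk : h ∈ K₁, ρ₁ ⟨h, hk⟩ v = v})
    (hsm₂ : ∀ v : V₂, IsOpen {h : H | ∃ hk : h ∈ K₂, ρ₂ ⟨h, hk⟩ v = v})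
    (Ind₁ : Submodule C (H → V₁)) (Ind₂ : Submodule C (H → V₂))
    (hInd₁ : ∀ f : H → V₁, f ∈ Ind₁ ↔
      ((∀ (k : K₁) (h : H), f (↑k * h) = ρ₁ k (f h)) ∧
        ∃ s : Finset H, ∀ x : H, f x ≠ 0 → ∃ h ∈ s, ∃ k : K₁, x = ↑k * h))
    (hInd₂ : ∀ f : H → V₂, f ∈ Ind₂ ↔
      ((∀ (k : K₂) (h : H), f (↑k * h) = ρ₂ k (f h)) ∧
        ∃ s : Finset H, ∀ x : H, f x ≠ 0 → ∃ h ∈ s, ∃ k : K₂, x = ↑k * h))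
    (IndK'₁ : Submodule C (H → V₁)) (IndK'₂ : Submodule C (H → V₂))
    (hIndK'₁ : ∀ f : H → V₁, f ∈ IndK'₁ ↔ (f ∈ Ind₁ ∧ ∀ x : H, x ∉ K' → f x = 0))
    (hIndK'₂ : ∀ f : H → V₂, f ∈ IndK'₂ ↔ (f ∈ Ind₂ ∧ ∀ x : H, x ∉ K' → f x = 0)) :
    -- injectivity of the restriction correspondence
    (∀ Φ Φ' : Ind₁ →ₗ[C] Ind₂,
      (∀ (g : H) (f f' : Ind₁), (↑f' : H → V₁) = (fun h => (↑f : H → V₁) (h * g)) →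
        (↑(Φ f') : H → V₂) = fun h => (↑(Φ f) : H → V₂) (h * g)) →
      (∀ (g : H) (f f' : Ind₁), (↑f' : H → V₁) = (fun h => (↑f : H → V₁) (h * g)) →
        (↑(Φ' f') : H → V₂) = fun h => (↑(Φ' f) : H → V₂) (h * g)) →
      (∀ f : Ind₁, (↑f : H → V₁) ∈ IndK'₁ → (↑(Φ f) : H → V₂) ∈ IndK'₂) →
      (∀ f : Ind₁, (↑f : H → V₁) ∈ IndK'₁ → (↑(Φ' f) : H → V₂) ∈ IndK'₂) →
      (∀ f : Ind₁, (↑f : H → V₁) ∈ IndK'₁ → Φ f = Φ' f) → Φ = Φ') ∧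
    -- surjectivity of the restriction correspondence
    (∀ Ψ : IndK'₁ →ₗ[C] IndK'₂,
      (∀ k ∈ K', ∀ (f f' : IndK'₁),
        (↑f' : H → V₁) = (fun h => (↑f : H → V₁) (h * k)) →
        (↑(Ψ f') : H → V₂) = fun h => (↑(Ψ f) : H → V₂) (h * k)) →
      ∃ Φ : Ind₁ →ₗ[C] Ind₂,
        (∀ (g : H) (f f' : Ind₁), (↑f' : H → V₁) = (fun h => (↑f : H → V₁) (h * g)) →
          (↑(Φ f') : H → V₂) = fun h => (↑(Φ f) : H → V₂) (h * g)) ∧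
        (∀ f : Ind₁, (↑f : H → V₁) ∈ IndK'₁ → (↑(Φ f) : H → V₂) ∈ IndK'₂) ∧
        (∀ (f : Ind₁) (g : IndK'₁), (↑g : H → V₁) = (↑f : H → V₁) →
          (↑(Ψ g) : H → V₂) = (↑(Φ f) : H → V₂))) := by
  constructor
  · -- injectivity
    intro Φ Φ' hΦ hΦ' _ _ hagree
    apply LinearMap.ext
    intro f
    obtain ⟨hf1, s, hs⟩ := (hInd₁ (f : H → V₁)).mp f.2
    set r : H → H := fun x => (Quotient.mk (QuotientGroup.rightRel K') x).out with hr_def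
    have hra : ∀ x : H, x * (r x)⁻¹ ∈ K' := by
      intro x
      have := Quotient.mk_out (s := QuotientGroup.rightRel K') x
      rwa [QuotientGroup.rightRel_apply] at this
    have hrb : ∀ x y : H, y * x⁻¹ ∈ K' → r x = r y := by
      intro x y h
      have : Quotient.mk (QuotientGroup.rightRel K') x
          = Quotient.mk (QuotientGroup.rightRel K') y :=
        Quotient.sound (QuotientGroup.rightRel_apply.mpr h)
      simp only [hr_def, this]
    have memP : ∀ t : H,
        (fun h => if h * t⁻¹ ∈ K' then (f : H → V₁) h else 0) ∈ Ind₁ := by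
      intro t
      rw [hInd₁]
      constructor
      · intro k h
        have hiff : ((↑k * h * t⁻¹ : H) ∈ K') ↔ (h * t⁻¹ ∈ K') := by
          rw [mul_assoc]; exact K'.mul_mem_cancel_left (hK₁ k.2)
        show (if (↑k * h : H) * t⁻¹ ∈ K' then (f : H → V₁) (↑k * h) else 0)
          = ρ₁ k (if h * t⁻¹ ∈ K' then (f : H → V₁) h else 0)
        by_cases hh : h * t⁻¹ ∈ K'
        · rw [if_pos (hiff.mpr hh), if_pos hh]; exact hf1 k h
        · rw [if_neg (fun hc => hh (hiff.mp hc)), if_neg hh, map_zero]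
      · refine ⟨s, fun y hy => ?_⟩
        have hy' : (if y * t⁻¹ ∈ K' then (f : H → V₁) y else 0) ≠ 0 := hy
        by_cases hyK : y * t⁻¹ ∈ K'
        · rw [if_pos hyK] at hy'; exact hs y hy'
        · rw [if_neg hyK] at hy'; exact absurd rfl hy'
    have memE : ∀ t : H,
        (fun h => if h ∈ K' then (f : H → V₁) (h * t) else 0) ∈ IndK'₁ :=
      fun t => aux_mem_stmt18 K₁ K' hK₁ ρ₁ Ind₁ hInd₁ IndK'₁ hIndK'₁ _ f.2 t
    set T : Finset H := s.image r with hT_def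
    set P : H → Ind₁ := fun t =>
      ⟨fun h => if h * t⁻¹ ∈ K' then (f : H → V₁) h else 0, memP t⟩ with hP_def
    set E : H → Ind₁ := fun t =>
      ⟨fun h => if h ∈ K' then (f : H → V₁) (h * t) else 0,
        ((hIndK'₁ _).mp (memE t)).1⟩ with hE_def
    have hdecomp : f = ∑ t ∈ T, P t := by
      apply Subtype.ext
      rw [AddSubmonoidClass.coe_finset_sum]
      funext h
      rw [Finset.sum_apply]
      symm
      by_cases hfh : (f : H → V₁) h = 0
      · rw [hfh]
        apply Finset.sum_eq_zero
        intro t _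
        show (if h * t⁻¹ ∈ K' then (f : H → V₁) h else 0) = 0
        split <;> [exact hfh; rfl]
      · obtain ⟨h₀, hh₀, k, hk⟩ := hs h hfh
        have hrh : r h₀ = r h := by
          apply hrb
          rw [hk, mul_inv_cancel_right]
          exact hK₁ k.2
        rw [Finset.sum_eq_single (r h₀)]
        · show (if h * (r h₀)⁻¹ ∈ K' then (f : H → V₁) h else 0) = (f : H → V₁) h
          rw [hrh, if_pos (hra h)]
        · intro t htT hne
          obtain ⟨h₁, _, rfl⟩ := Finset.mem_image.mp htT
          by_cases hmem : h * (r h₁)⁻¹ ∈ K'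
          · exact absurd (by rw [← hrb (r h₁) h₁ (hra h₁), hrb (r h₁) h hmem, ← hrh]) hne
          · show (if h * (r h₁)⁻¹ ∈ K' then (f : H → V₁) h else 0) = 0
            rw [if_neg hmem]
        · intro habs
          exact absurd (Finset.mem_image.mpr ⟨h₀, hh₀, rfl⟩) habs
    have hpiece : ∀ t : H, Φ (P t) = Φ' (P t) := by
      intro t
      have hrel : ((P t : Ind₁) : H → V₁) = fun h => ((E t : Ind₁) : H → V₁) (h * t⁻¹) := by
        funext h
        show (if h * t⁻¹ ∈ K' then (f : H → V₁) h else 0)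
          = (if h * t⁻¹ ∈ K' then (f : H → V₁) (h * t⁻¹ * t) else 0)
        rw [inv_mul_cancel_right]
      have h1 := hΦ t⁻¹ (E t) (P t) hrel
      have h2 := hΦ' t⁻¹ (E t) (P t) hrel
      have h3 : Φ (E t) = Φ' (E t) := hagree (E t) (memE t)
      apply Subtype.ext
      rw [h1, h2, h3]
    rw [hdecomp, map_sum, map_sum]
    exact Finset.sum_congr rfl fun t _ => hpiece t
  · -- surjectivity
    intro Ψ hΨ
    have memT : ∀ (f : Ind₁) (x : H),
        (fun h => if h ∈ K' then (f : H → V₁) (h * x) else 0) ∈ IndK'₁ :=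
      fun f x => aux_mem_stmt18 K₁ K' hK₁ ρ₁ Ind₁ hInd₁ IndK'₁ hIndK'₁ _ f.2 x
    set Tf : Ind₁ → H → IndK'₁ := fun f x =>
      ⟨fun h => if h ∈ K' then (f : H → V₁) (h * x) else 0, memT f x⟩ with hTf_def
    set Φ₀ : Ind₁ →ₗ[C] (H → V₂) :=
      { toFun := fun f => fun x => ((Ψ (Tf f x) : IndK'₂) : H → V₂) 1
        map_add' := by
          intro f g
          funext x
          show ((Ψ (Tf (f + g) x) : IndK'₂) : H → V₂) 1
            = ((Ψ (Tf f x) : IndK'₂) : H → V₂) 1 + ((Ψ (Tf g x) : IndK'₂) : H → V₂) 1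
          have : Tf (f + g) x = Tf f x + Tf g x := by
            apply Subtype.ext
            funext h
            show (if h ∈ K' then ((f + g : Ind₁) : H → V₁) (h * x) else 0)
              = (if h ∈ K' then (f : H → V₁) (h * x) else 0)
                + (if h ∈ K' then (g : H → V₁) (h * x) else 0)
            by_cases hh : h ∈ K' <;> simp [hh]
          rw [this, map_add]
          rfl
        map_smul' := by
          intro c f
          funext x
          show ((Ψ (Tf (c • f) x) : IndK'₂) : H → V₂) 1
            = c • ((Ψ (Tf f x) : IndK'₂) : H → V₂) 1
          have : Tf (c • f) x = c • Tf f x := by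
            apply Subtype.ext
            funext h
            show (if h ∈ K' then ((c • f : Ind₁) : H → V₁) (h * x) else 0)
              = c • (if h ∈ K' then (f : H → V₁) (h * x) else 0)
            by_cases hh : h ∈ K' <;> simp [hh]
          rw [this, map_smul]
          rfl } with hΦ₀_def
    have htrans : ∀ (f : Ind₁) (x k : H), k ∈ K' →
        ((Ψ (Tf f (k * x)) : IndK'₂) : H → V₂)
          = fun h => ((Ψ (Tf f x) : IndK'₂) : H → V₂) (h * k) := by
      intro f x k hk
      apply hΨ k hk
      funext h
      have hiff : (h * k ∈ K') ↔ (h ∈ K') := K'.mul_mem_cancel_right hk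
      show (if h ∈ K' then (f : H → V₁) (h * (k * x)) else 0)
        = (if h * k ∈ K' then (f : H → V₁) (h * k * x) else 0)
      by_cases hh : h ∈ K'
      · rw [if_pos hh, if_pos (hiff.mpr hh), mul_assoc]
      · rw [if_neg hh, if_neg (fun hc => hh (hiff.mp hc))]
    have hmem : ∀ f : Ind₁, Φ₀ f ∈ Ind₂ := by
      intro f
      obtain ⟨hf1, s, hs⟩ := (hInd₁ (f : H → V₁)).mp f.2
      rw [hInd₂]
      constructor
      · intro k x
        have h1 := htrans f x ↑k (hK₂ k.2)
        have h2 : ((Ψ (Tf f x) : IndK'₂) : H → V₂) ∈ Ind₂ :=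
          ((hIndK'₂ _).mp (Ψ (Tf f x)).2).1
        have h3 := ((hInd₂ _).mp h2).1 k 1
        show ((Ψ (Tf f (↑k * x)) : IndK'₂) : H → V₂) 1
          = ρ₂ k (((Ψ (Tf f x) : IndK'₂) : H → V₂) 1)
        rw [mul_one] at h3
        simp only [h1, one_mul]
        exact h3
      · choose s' hs' using fun h₀ : H =>
          ((hInd₂ _).mp ((hIndK'₂ _).mp (Ψ (Tf f h₀)).2).1).2
        refine ⟨s.biUnion (fun h₀ => (s' h₀).image (· * h₀)), fun x hx => ?_⟩
        have hne : ∃ h : H, ((Tf f x : IndK'₁) : H → V₁) h ≠ 0 := by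
          by_contra hc
          push_neg at hc
          have hz : Tf f x = 0 := Subtype.ext (funext hc)
          apply hx
          show ((Ψ (Tf f x) : IndK'₂) : H → V₂) 1 = 0
          rw [hz, map_zero]
          rfl
        obtain ⟨h, hh⟩ := hne
        have hh' : (if h ∈ K' then (f : H → V₁) (h * x) else 0) ≠ 0 := hh
        by_cases hhK : h ∈ K'
        swap
        · rw [if_neg hhK] at hh'; exact absurd rfl hh'
        rw [if_pos hhK] at hh'
        obtain ⟨h₀, hh₀, k, hk⟩ := hs (h * x) hh'
        have hxe : x = (h⁻¹ * ↑k) * h₀ := by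
          rw [mul_assoc, ← hk, ← mul_assoc, inv_mul_cancel, one_mul]
        have hk' : h⁻¹ * ↑k ∈ K' := K'.mul_mem (K'.inv_mem hhK) (hK₁ k.2)
        have h1 := htrans f h₀ (h⁻¹ * ↑k) hk'
        have h2 : ((Ψ (Tf f h₀) : IndK'₂) : H → V₂) (h⁻¹ * ↑k) ≠ 0 := by
          intro hc
          apply hx
          show ((Ψ (Tf f x) : IndK'₂) : H → V₂) 1 = 0
          rw [hxe]
          simp only [h1, one_mul]
          exact hc
        obtain ⟨t, ht, k₂, hk₂⟩ := hs' h₀ _ h2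
        refine ⟨t * h₀, Finset.mem_biUnion.mpr
          ⟨h₀, hh₀, Finset.mem_image.mpr ⟨t, ht, rfl⟩⟩, k₂, ?_⟩
        rw [hxe, hk₂, mul_assoc]
    set Φ : Ind₁ →ₗ[C] Ind₂ := Φ₀.codRestrict Ind₂ hmem with hΦ_def
    have hcomp : ∀ (f : Ind₁) (g : IndK'₁), (g : H → V₁) = (f : H → V₁) →
        ((Ψ g : IndK'₂) : H → V₂) = Φ₀ f := by
      intro f g hgf
      funext x
      show ((Ψ g : IndK'₂) : H → V₂) x = ((Ψ (Tf f x) : IndK'₂) : H → V₂) 1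
      by_cases hx : x ∈ K'
      · have hrel : ((Tf f x : IndK'₁) : H → V₁) = fun h => (g : H → V₁) (h * x) := by
          funext h
          show (if h ∈ K' then (f : H → V₁) (h * x) else 0) = (g : H → V₁) (h * x)
          by_cases hh : h ∈ K'
          · rw [if_pos hh, hgf]
          · rw [if_neg hh]
            have hnx : h * x ∉ K' := fun hc => hh (by
              have := K'.mul_mem hc (K'.inv_mem hx)
              rwa [mul_assoc, mul_inv_cancel, mul_one] at this)
            exact (((hIndK'₁ _).mp g.2).2 _ hnx).symm
        have h1 := hΨ x hx g (Tf f x) hrel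
        simp only [h1, one_mul]
      · have hTz : Tf f x = 0 := by
          apply Subtype.ext
          funext h
          show (if h ∈ K' then (f : H → V₁) (h * x) else 0) = 0
          by_cases hh : h ∈ K'
          · rw [if_pos hh, ← hgf]
            have hnx : h * x ∉ K' := fun hc => hx (by
              have := K'.mul_mem (K'.inv_mem hh) hc
              rwa [← mul_assoc, inv_mul_cancel, one_mul] at this)
            exact ((hIndK'₁ _).mp g.2).2 _ hnx
          · rw [if_neg hh]
        have h2 : ((Ψ g : IndK'₂) : H → V₂) x = 0 :=
          ((hIndK'₂ _).mp (Ψ g).2).2 x hx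
        rw [h2, hTz, map_zero]
        rfl
    refine ⟨Φ, ?_, ?_, ?_⟩
    · intro g f f' hff'
      have hT : ∀ x : H, Tf f' x = Tf f (x * g) := by
        intro x
        apply Subtype.ext
        funext h
        show (if h ∈ K' then (f' : H → V₁) (h * x) else 0)
          = (if h ∈ K' then (f : H → V₁) (h * (x * g)) else 0)
        simp only [hff']
        by_cases hh : h ∈ K'
        · rw [if_pos hh, if_pos hh, mul_assoc]
        · rw [if_neg hh, if_neg hh]
      funext x
      show ((Ψ (Tf f' x) : IndK'₂) : H → V₂) 1 = ((Ψ (Tf f (x * g)) : IndK'₂) : H → V₂) 1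
      rw [hT x]
    · intro f hf
      have := hcomp f ⟨(f : H → V₁), hf⟩ rfl
      show Φ₀ f ∈ IndK'₂
      rw [← this]
      exact (Ψ ⟨(f : H → V₁), hf⟩).2
    · intro f g hgf
      exact hcomp f g hgf
end
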